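/- arXiv:1508.05372 — 5 statements merged into one kernel-verified Lean document; each statement's English description precedes it below -/
import Mathlib

section
/- Let n ≥ 1, let M be an n×n complex matrix, and let D be the n×n diagonal matrix diag(1, 2, …, n). Then the set of complex numbers t for which the matrix (1−t)·M + t·D has a repeated eigenvalue (equivalently, for which its characteristic polynomial has a repeated complex root) is finite, and it has at most n(n−1) elements. -/
/-!
Put `A_t = M + t (D - M)` and `r(t) = det χ_{A_t}'(A_t) = ∏ χ_{A_t}'(λ)`, the product over the
eigenvalues `λ` of `A_t`, so that `r(t) = 0` exactly when `χ_{A_t}` has a repeated root. As the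
entries of `A_t` are affine in `t`, `χ_{A_t}(X)` has total degree `n` in `(t, X)`, hence
`χ_{A_t}'` has total degree `n - 1`, the entries of `χ_{A_t}'(A_t)` have degree `≤ n - 1` in `t`,
and `r` is a polynomial of degree `≤ n (n - 1)`. It is nonzero because `A_1 = D` has distinct
eigenvalues, so the bad `t` lie among its at most `n (n - 1)` roots.
-/

open Polynomial

namespace Polynomial

variable {R : Type*} [CommRing R]

/-- `f : R[X][X]`, viewed as a polynomial in two variables, has total degree at most `m`. -/
def TotalDegreeLE (m : ℕ) (f : R[X][X]) : Prop :=
  ∀ k j, m < k + j → (f.coeff k).coeff j = 0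

namespace TotalDegreeLE

variable {m d : ℕ} {f g : R[X][X]}

theorem zero (m : ℕ) : TotalDegreeLE m (0 : R[X][X]) := fun k j _ => by simp

theorem add (hf : TotalDegreeLE m f) (hg : TotalDegreeLE m g) : TotalDegreeLE m (f + g) :=
  fun k j h => by simp [hf k j h, hg k j h]

theorem zsmul (z : ℤ) (hf : TotalDegreeLE m f) : TotalDegreeLE m (z • f) :=
  fun k j h => by simp [hf k j h]

theorem neg (hf : TotalDegreeLE m f) : TotalDegreeLE m (-f) :=
  fun k j h => by simp [hf k j h]

theorem sub (hf : TotalDegreeLE m f) (hg : TotalDegreeLE m g) : TotalDegreeLE m (f - g) :=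
  sub_eq_add_neg f g ▸ hf.add hg.neg

theorem C {b : R[X]} (hb : b.natDegree ≤ m) : TotalDegreeLE m (C b) := by
  intro k j h
  rcases eq_or_ne k 0 with rfl | hk
  · simpa using coeff_eq_zero_of_natDegree_lt (by omega)
  · simp [coeff_C, hk]

theorem X : TotalDegreeLE 1 (X : R[X][X]) := by
  intro k j h
  rcases eq_or_ne k 1 with rfl | hk
  · exact coeff_eq_zero_of_natDegree_lt (by simpa using h)
  · simp [coeff_X, Ne.symm hk]

theorem mul (hf : TotalDegreeLE m f) (hg : TotalDegreeLE d g) : TotalDegreeLE (m + d) (f * g) := by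
  intro k j h
  rw [coeff_mul, finsetSum_coeff]
  refine Finset.sum_eq_zero fun uv huv => ?_
  rw [coeff_mul]
  refine Finset.sum_eq_zero fun ab hab => ?_
  rw [Finset.HasAntidiagonal.mem_antidiagonal] at huv hab
  by_cases h1 : m < uv.1 + ab.1
  · rw [hf _ _ h1, zero_mul]
  · rw [hg _ _ (by omega), mul_zero]

theorem sum {ι : Type*} {s : Finset ι} {f : ι → R[X][X]} (hf : ∀ i ∈ s, TotalDegreeLE m (f i)) :
    TotalDegreeLE m (∑ i ∈ s, f i) := by
  classical
  induction s using Finset.induction_on with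
  | empty => simpa using zero m
  | insert i s hi ih =>
    rw [Finset.sum_insert hi]
    exact (hf i (s.mem_insert_self i)).add (ih fun j hj => hf j (Finset.mem_insert_of_mem hj))

theorem prod {ι : Type*} {s : Finset ι} {f : ι → R[X][X]} (hf : ∀ i ∈ s, TotalDegreeLE d (f i)) :
    TotalDegreeLE (s.card * d) (∏ i ∈ s, f i) := by
  classical
  induction s using Finset.induction_on with
  | empty => simpa using C (m := 0) (b := (1 : R[X])) (by simp)
  | insert i s hi ih =>
    rw [Finset.prod_insert hi, Finset.card_insert_of_notMem hi, add_one_mul, add_comm]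
    exact (hf i (s.mem_insert_self i)).mul (ih fun j hj => hf j (Finset.mem_insert_of_mem hj))

theorem det {n : Type*} [Fintype n] [DecidableEq n] {A : Matrix n n R[X][X]}
    (hA : ∀ i j, TotalDegreeLE d (A i j)) : TotalDegreeLE (Fintype.card n * d) A.det := by
  rw [Matrix.det_apply]
  refine sum fun σ _ => ?_
  rw [Units.smul_def]
  exact zsmul _ (prod fun i _ => hA (σ i) i)

theorem charpoly {n : Type*} [Fintype n] [DecidableEq n] {B : Matrix n n R[X]}
    (hB : ∀ i j, (B i j).natDegree ≤ 1) : TotalDegreeLE (Fintype.card n) B.charpoly := by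
  simpa [Matrix.charpoly] using det (d := 1) fun i j => by
    by_cases h : i = j
    · subst h
      simpa [Matrix.charmatrix_apply_eq] using X.sub (C (hB i i))
    · simpa [Matrix.charmatrix_apply_ne _ _ _ h] using (C (hB i j)).neg

theorem derivative (hf : TotalDegreeLE m f) : TotalDegreeLE (m - 1) (derivative f) := by
  intro k j h
  rw [coeff_derivative, ← C_eq_natCast, ← C_1, ← C_add, coeff_mul_C, hf (k + 1) j (by omega), zero_mul]

theorem natDegree_coeff_le (hf : TotalDegreeLE m f) (k : ℕ) : (f.coeff k).natDegree ≤ m - k :=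
  natDegree_le_iff_coeff_eq_zero.mpr fun j hj => hf k j (by omega)

theorem coeff_eq_zero (hf : TotalDegreeLE m f) {k : ℕ} (hk : m < k) : f.coeff k = 0 :=
  ext fun j => by simpa using hf k j (by omega)

end TotalDegreeLE

end Polynomial

namespace Matrix

variable {n R : Type*} [Fintype n] [DecidableEq n] [CommRing R]

theorem natDegree_det_le {d : ℕ} {A : Matrix n n R[X]} (hA : ∀ i j, (A i j).natDegree ≤ d) :
    A.det.natDegree ≤ Fintype.card n * d := by
  rw [det_apply]
  refine natDegree_sum_le_of_forall_le _ _ fun σ _ => ?_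
  rw [Units.smul_def]
  refine (natDegree_smul_le _ _).trans ((natDegree_prod_le _ _).trans ?_)
  simpa using Finset.sum_le_sum fun i (_ : i ∈ Finset.univ) => hA (σ i) i

theorem natDegree_pow_apply_le {d : ℕ} {A : Matrix n n R[X]} (hA : ∀ i j, (A i j).natDegree ≤ d)
    (k : ℕ) (i j : n) : ((A ^ k) i j).natDegree ≤ k * d := by
  induction k generalizing j with
  | zero => by_cases h : i = j <;> simp [h]
  | succ k ih =>
    rw [pow_succ, mul_apply, add_one_mul]
    exact natDegree_sum_le_of_forall_le _ _ fun l _ =>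
      natDegree_mul_le.trans (add_le_add (ih l) (hA l j))

theorem natDegree_aeval_apply_le {m : ℕ} {f : R[X][X]} (hf : f.TotalDegreeLE m)
    {B : Matrix n n R[X]} (hB : ∀ i j, (B i j).natDegree ≤ 1) (i j : n) :
    ((aeval B f) i j).natDegree ≤ m := by
  rw [aeval_eq_sum_range, sum_apply]
  refine natDegree_sum_le_of_forall_le _ _ fun k _ => ?_
  rcases le_or_gt k m with hk | hk
  · rw [smul_apply, smul_eq_mul]
    refine natDegree_mul_le.trans ?_
    have := natDegree_pow_apply_le hB k i j
    have := hf.natDegree_coeff_le k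
    omega
  · simp [hf.coeff_eq_zero hk]

/-- Up to sign, the discriminant of `χ_A`. -/
noncomputable def derivCharpolyDet (A : Matrix n n R) : R :=
  (aeval A (derivative A.charpoly)).det

theorem natDegree_derivCharpolyDet_le {B : Matrix n n R[X]} (hB : ∀ i j, (B i j).natDegree ≤ 1) :
    B.derivCharpolyDet.natDegree ≤ Fintype.card n * (Fintype.card n - 1) :=
  natDegree_det_le (natDegree_aeval_apply_le (TotalDegreeLE.charpoly hB).derivative hB)

theorem map_derivCharpolyDet {S : Type*} [CommRing S] (φ : R →+* S) (A : Matrix n n R) :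
    φ A.derivCharpolyDet = (A.map φ).derivCharpolyDet := by
  have hcomm : (algebraMap S (Matrix n n S)).comp φ = φ.mapMatrix.comp (algebraMap R _) := by
    ext r i j
    by_cases h : i = j <;> simp [algebraMap_eq_diagonal, h]
  rw [derivCharpolyDet, derivCharpolyDet, RingHom.map_det, map_aeval_eq_aeval_map hcomm,
    ← derivative_map, ← charpoly_map, RingHom.mapMatrix_apply]

theorem derivCharpolyDet_eq_zero_iff {K : Type*} [Field K] [IsAlgClosed K] (A : Matrix n n K) :
    A.derivCharpolyDet = 0 ↔ ¬ Squarefree A.charpoly := by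
  rcases isEmpty_or_nonempty n with hn | hn
  · simp [derivCharpolyDet, charpoly_isEmpty]
  rw [← PerfectField.separable_iff_squarefree, separable_def,
    isCoprime_iff_aeval_ne_zero_of_isAlgClosed (k := K) K, derivCharpolyDet,
    ← isUnit_iff_ne_zero.not_left, ← isUnit_iff_isUnit_det, ← spectrum.zero_mem_iff K,
    spectrum.map_polynomial_aeval_of_nonempty _ _
      (spectrum.nonempty_of_isAlgClosed_of_finiteDimensional K A)]
  simp [mem_spectrum_iff_isRoot_charpoly]

theorem squarefree_charpoly_diagonal {K : Type*} [Field K] {d : n → K}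
    (hd : Function.Injective d) : Squarefree (diagonal d).charpoly := by
  rw [charpoly_diagonal]
  exact (separable_prod_X_sub_C_iff.mpr hd).squarefree

end Matrix

theorem stmt_2_general (n : ℕ) (M : Matrix (Fin n) (Fin n) ℂ)
    (D : Matrix (Fin n) (Fin n) ℂ)
    (hD : D = Matrix.diagonal (fun i : Fin n => ((i : ℕ) + 1 : ℂ))) :
    {t : ℂ | ¬ Squarefree (Matrix.charpoly ((1 - t) • M + t • D))}.Finite ∧
      {t : ℂ | ¬ Squarefree (Matrix.charpoly ((1 - t) • M + t • D))}.ncard ≤ n * (n - 1) := by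
  let B : Matrix (Fin n) (Fin n) ℂ[X] := M.map C + (X : ℂ[X]) • (D - M).map C
  have hB : ∀ i j, (B i j).natDegree ≤ 1 := fun i j => by
    simp only [B, Matrix.add_apply, Matrix.smul_apply, Matrix.map_apply, smul_eq_mul]
    compute_degree
  have hBeval (t : ℂ) : B.map (eval t) = (1 - t) • M + t • D := by
    ext i j
    simp only [B, Matrix.map_apply, Matrix.add_apply, Matrix.smul_apply, Matrix.sub_apply,
      smul_eq_mul, eval_add, eval_mul, eval_X, eval_C]
    ring
  set r := B.derivCharpolyDet
  have hr (t : ℂ) : r.eval t = ((1 - t) • M + t • D).derivCharpolyDet := by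
    rw [← hBeval, ← coe_evalRingHom, Matrix.map_derivCharpolyDet]
  have hr0 : r ≠ 0 := by
    refine fun h => (Matrix.derivCharpolyDet_eq_zero_iff D).mp ?_ ?_
    · simpa [h] using (hr 1).symm
    · rw [hD]
      exact Matrix.squarefree_charpoly_diagonal fun i j h => Fin.ext (by simpa using h)
  have hsub : {t : ℂ | ¬ Squarefree (Matrix.charpoly ((1 - t) • M + t • D))} ⊆ r.rootSet ℂ :=
    fun t ht => by
      rw [mem_rootSet, coe_aeval_eq_eval, hr, Matrix.derivCharpolyDet_eq_zero_iff]
      exact ⟨hr0, ht⟩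
  refine ⟨(r.rootSet_finite ℂ).subset hsub, ?_⟩
  calc _ ≤ (r.rootSet ℂ).ncard := Set.ncard_le_ncard hsub (r.rootSet_finite ℂ)
    _ ≤ r.natDegree := r.ncard_rootSet_le ℂ
    _ ≤ n * (n - 1) := by
      simpa using Matrix.natDegree_derivCharpolyDet_le hB

/-- For an `n × n` complex matrix `M` (`n ≥ 1`) and `D = diag(1, 2, …, n)`, the set of
`t : ℂ` for which `(1 - t) • M + t • D` has a repeated eigenvalue (i.e. its characteristic
polynomial is not squarefree) is finite, with at most `n * (n - 1)` elements. -/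
theorem stmt_2 (n : ℕ) (hn : 1 ≤ n) (M : Matrix (Fin n) (Fin n) ℂ)
    (D : Matrix (Fin n) (Fin n) ℂ)
    (hD : D = Matrix.diagonal (fun i : Fin n => ((i : ℕ) + 1 : ℂ))) :
    {t : ℂ | ¬ Squarefree (Matrix.charpoly ((1 - t) • M + t • D))}.Finite ∧
      {t : ℂ | ¬ Squarefree (Matrix.charpoly ((1 - t) • M + t • D))}.ncard ≤ n * (n - 1) :=
  stmt_2_general n M D hD
end

section
/- Let n ≥ 1 and let M be an n×n complex matrix admitting a diagonalization M = U · diag(λ_1, …, λ_n) · U⁻¹ with U invertible, where the λ_i are pairwise distinct with |λ_i − λ_j| ≥ ε for all i ≠ j (ε > 0) and |λ_i| ≤ B for all i. Let μ_1, …, μ_n be complex numbers with |μ_i| ≤ 1 for all i, and let M' = U · diag(μ_1, …, μ_n) · U⁻¹. Then every entry of M' has absolute value at most n² · (1+B)^{n−1} · ε^{−(n−1)} · (n · max(1, ‖M‖))^{n−1}. -/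
/-- The max-norm of a matrix: the supremum of the absolute values of its entries. -/
noncomputable def matMaxNorm {n : ℕ} (M : Matrix (Fin n) (Fin n) ℂ) : ℝ :=
  ⨆ i, ⨆ j, ‖M i j‖

/-! Since the eigenvalues are distinct, `M' = p(M)` for the Lagrange interpolation polynomial `p`
with `p(λᵢ) = μᵢ`, i.e. `M' = ∑ᵢ μᵢ ∏_{j ≠ i} (M - λⱼ) / (λᵢ - λⱼ)`. Each factor has entries of
size at most `ε⁻¹ (‖M‖ + B)`, and a product of `n - 1` matrices whose entries are bounded by `c`
has entries bounded by `(n c)^(n-1)`. -/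

open Polynomial Matrix

namespace Matrix

variable {m R 𝕜 ι : Type*}

theorem norm_mul_apply_le [Fintype m] [NormedRing R] {A B : Matrix m m R} {K L : ℝ}
    (hA : ∀ a b, ‖A a b‖ ≤ K) (hB : ∀ a b, ‖B a b‖ ≤ L) (a b : m) :
    ‖(A * B) a b‖ ≤ Fintype.card m * K * L := by
  rw [mul_apply]
  calc ‖∑ k, A a k * B k b‖ ≤ ∑ k, ‖A a k‖ * ‖B k b‖ :=
        (norm_sum_le _ _).trans (Finset.sum_le_sum fun k _ => norm_mul_le _ _)
    _ ≤ ∑ _k : m, K * L := Finset.sum_le_sum fun k _ =>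
        mul_le_mul (hA a k) (hB k b) (norm_nonneg _) ((norm_nonneg _).trans (hA a k))
    _ = Fintype.card m * K * L := by
        rw [Finset.sum_const, Finset.card_univ, nsmul_eq_mul, mul_assoc]

theorem norm_one_apply_le [DecidableEq m] [NormedRing R] [NormOneClass R] (a b : m) :
    ‖(1 : Matrix m m R) a b‖ ≤ 1 := by
  rw [one_apply]
  split_ifs <;> simp

variable [Fintype m] [DecidableEq m]

theorem aeval_conj_diagonal [CommRing R] {U : Matrix m m R} (hU : IsUnit U) (d : m → R)
    (p : R[X]) :
    aeval (U * diagonal d * U⁻¹) p = U * diagonal (fun k => p.eval (d k)) * U⁻¹ := by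
  let φ : (m → R) →ₐ[R] Matrix m m R :=
    (MulSemiringAction.toAlgEquiv R (Matrix m m R) (ConjAct.toConjAct hU.unit)).toAlgHom.comp
      (diagonalAlgHom R)
  have hφ : ∀ d, φ d = U * diagonal d * U⁻¹ := fun d => by
    simp [φ, ConjAct.units_smul_def, Matrix.coe_units_inv]
  rw [← hφ, aeval_algHom_apply, hφ, aeval_pi_apply]
  simp only [coe_aeval_eq_eval]

theorem norm_aeval_prod_apply_le [NormedCommRing R] [NormOneClass R] [DecidableEq ι]
    (M : Matrix m m R) (t : Finset ι) (q : ι → R[X]) {K : ℝ}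
    (hq : ∀ j ∈ t, ∀ a b, ‖(aeval M (q j)) a b‖ ≤ K) (a b : m) :
    ‖(aeval M (∏ j ∈ t, q j)) a b‖ ≤ (Fintype.card m * K) ^ t.card := by
  induction t using Finset.induction_on generalizing a b with
  | empty => simpa using norm_one_apply_le a b
  | insert j t hj ih =>
    rw [Finset.prod_insert hj, map_mul, Finset.card_insert_of_notMem hj, pow_succ']
    exact norm_mul_apply_le (hq j (t.mem_insert_self j))
      (ih fun i hi => hq i (Finset.mem_insert_of_mem hi)) a b

variable [NormedField 𝕜]

theorem norm_aeval_basisDivisor_apply_le {M : Matrix m m 𝕜} {C : ℝ} (hM : ∀ a b, ‖M a b‖ ≤ C)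
    (x y : 𝕜) (a b : m) :
    ‖(aeval M (Lagrange.basisDivisor x y)) a b‖ ≤ ‖x - y‖⁻¹ * (C + ‖y‖) := by
  have : aeval M (Lagrange.basisDivisor x y) = (x - y)⁻¹ • (M - y • 1) := by
    simp [Lagrange.basisDivisor, Algebra.algebraMap_eq_smul_one]
  rw [this, smul_apply, smul_eq_mul, norm_mul, norm_inv]
  gcongr
  rw [sub_apply, smul_apply, smul_eq_mul]
  refine (norm_sub_le _ _).trans (add_le_add (hM a b) ?_)
  rw [norm_mul]
  exact mul_le_of_le_one_right (norm_nonneg _) (norm_one_apply_le a b)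

theorem norm_aeval_lagrangeBasis_apply_le [DecidableEq ι] {M : Matrix m m 𝕜} {C δ B : ℝ}
    (hM : ∀ a b, ‖M a b‖ ≤ C) (hC : 0 ≤ C) (hδ : 0 < δ) {s : Finset ι} {v : ι → 𝕜} {i : ι}
    (hsep : ∀ j ∈ s, j ≠ i → δ ≤ ‖v i - v j‖) (hv : ∀ j ∈ s, ‖v j‖ ≤ B) (a b : m) :
    ‖(aeval M (Lagrange.basis s v i)) a b‖ ≤
      (Fintype.card m * (δ⁻¹ * (C + B))) ^ (s.erase i).card := by
  refine norm_aeval_prod_apply_le M _ _ (fun j hj a b => ?_) a b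
  obtain ⟨hji, hjs⟩ := Finset.mem_erase.mp hj
  refine (norm_aeval_basisDivisor_apply_le hM _ _ a b).trans ?_
  gcongr
  · exact hsep j hjs hji
  · exact hv j hjs

theorem norm_aeval_interpolate_apply_le [DecidableEq ι] (M : Matrix m m 𝕜) (s : Finset ι)
    (v r : ι → 𝕜) {K : ℝ}
    (hr : ∀ i ∈ s, ‖r i‖ ≤ 1) (hK : ∀ i ∈ s, ∀ a b, ‖(aeval M (Lagrange.basis s v i)) a b‖ ≤ K)
    (a b : m) :
    ‖(aeval M (Lagrange.interpolate s v r)) a b‖ ≤ s.card * K := by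
  rw [Lagrange.interpolate_apply, map_sum, sum_apply]
  calc ‖∑ i ∈ s, (aeval M (C (r i) * Lagrange.basis s v i)) a b‖
      ≤ ∑ i ∈ s, ‖r i‖ * ‖(aeval M (Lagrange.basis s v i)) a b‖ := by
        refine (norm_sum_le _ _).trans (Finset.sum_le_sum fun i _ => ?_)
        rw [map_mul, aeval_C, Algebra.algebraMap_eq_smul_one, smul_mul_assoc, one_mul,
          smul_apply, smul_eq_mul, norm_mul]
    _ ≤ ∑ _i ∈ s, 1 * K := Finset.sum_le_sum fun i hi =>
        mul_le_mul (hr i hi) (hK i hi a b) (norm_nonneg _) zero_le_one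
    _ = s.card * K := by rw [Finset.sum_const, nsmul_eq_mul, one_mul]

end Matrix

theorem norm_apply_le_matMaxNorm {n : ℕ} (M : Matrix (Fin n) (Fin n) ℂ) (a b : Fin n) :
    ‖M a b‖ ≤ matMaxNorm M :=
  (le_ciSup (f := fun j => ‖M a j‖) (Set.finite_range _).bddAbove b).trans
    (le_ciSup (f := fun i => ⨆ j, ‖M i j‖) (Set.finite_range _).bddAbove a)

theorem stmt_5_general (n : ℕ) (ε B : ℝ) (hε : 0 < ε)
    (M U M' : Matrix (Fin n) (Fin n) ℂ) (hU : IsUnit U)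
    (lam mu : Fin n → ℂ)
    (hM : M = U * Matrix.diagonal lam * U⁻¹)
    (hsep : ∀ i j, i ≠ j → ε ≤ ‖lam i - lam j‖)
    (hlamB : ∀ i, ‖lam i‖ ≤ B)
    (hmu : ∀ i, ‖mu i‖ ≤ 1)
    (hM' : M' = U * Matrix.diagonal mu * U⁻¹) :
    ∀ i j, ‖M' i j‖ ≤
      (n : ℝ) ^ 2 * (1 + B) ^ (n - 1) * (ε⁻¹) ^ (n - 1) *
        ((n : ℝ) * max 1 (matMaxNorm M)) ^ (n - 1) := by
  intro a b
  set C := matMaxNorm M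
  have hn : (1 : ℝ) ≤ n := by exact_mod_cast a.pos
  have hB : 0 ≤ B := (norm_nonneg _).trans (hlamB a)
  have hC : 0 ≤ C := (norm_nonneg _).trans (norm_apply_le_matMaxNorm M a a)
  have hinj : Function.Injective lam := fun i j hij => by
    by_contra hne
    have := hsep i j hne
    rw [hij, sub_self, norm_zero] at this
    exact this.not_gt hε
  have hM'_interpolate : M' = aeval M (Lagrange.interpolate Finset.univ lam mu) := by
    rw [hM', hM, Matrix.aeval_conj_diagonal hU]
    simp only [Lagrange.eval_interpolate_at_node _ hinj.injOn (Finset.mem_univ _)]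
  have hbasis : ∀ i ∈ Finset.univ, ∀ a b,
      ‖(aeval M (Lagrange.basis Finset.univ lam i)) a b‖ ≤ (n * (ε⁻¹ * (C + B))) ^ (n - 1) := by
    intro i _ a b
    simpa [Finset.card_erase_of_mem] using Matrix.norm_aeval_lagrangeBasis_apply_le (C := C)
      (s := Finset.univ) (norm_apply_le_matMaxNorm M) hC hε (fun j _ hji => hsep i j hji.symm)
      (fun j _ => hlamB j) a b
  have hCB : C + B ≤ (1 + B) * max 1 C := by
    nlinarith [le_max_left 1 C, le_max_right 1 C]
  calc ‖M' a b‖ ≤ n * (n * (ε⁻¹ * (C + B))) ^ (n - 1) := by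
        simpa [hM'_interpolate] using
          Matrix.norm_aeval_interpolate_apply_le M _ lam mu (fun i _ => hmu i) hbasis a b
    _ ≤ n ^ 2 * (n * (ε⁻¹ * ((1 + B) * max 1 C))) ^ (n - 1) := by
        gcongr
        nlinarith
    _ = _ := by rw [mul_pow, mul_pow, mul_pow]; ring

/-- If `M = U * diag(λ) * U⁻¹` with pairwise `ε`-separated eigenvalues bounded by `B`,
and `M' = U * diag(μ) * U⁻¹` with `|μ i| ≤ 1`, then every entry of `M'` is bounded by
`n² * (1+B)^(n-1) * ε⁻¹^(n-1) * (n * max 1 ‖M‖)^(n-1)`. -/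
theorem stmt_5 (n : ℕ) (hn : 1 ≤ n) (ε B : ℝ) (hε : 0 < ε)
    (M U M' : Matrix (Fin n) (Fin n) ℂ) (hU : IsUnit U)
    (lam mu : Fin n → ℂ)
    (hM : M = U * Matrix.diagonal lam * U⁻¹)
    (hsep : ∀ i j, i ≠ j → ε ≤ ‖lam i - lam j‖)
    (hlamB : ∀ i, ‖lam i‖ ≤ B)
    (hmu : ∀ i, ‖mu i‖ ≤ 1)
    (hM' : M' = U * Matrix.diagonal mu * U⁻¹) :
    ∀ i j, ‖M' i j‖ ≤
      (n : ℝ) ^ 2 * (1 + B) ^ (n - 1) * (ε⁻¹) ^ (n - 1) *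
        ((n : ℝ) * max 1 (matMaxNorm M)) ^ (n - 1) :=
  stmt_5_general n ε B hε M U M' hU lam mu hM hsep hlamB hmu hM'
end

section
/- Let f : ℝ → ℝ be infinitely differentiable, let η > 0, and suppose that |f^{(j)}(x)| ≤ j! · η^j for every x ∈ ℝ and every j ≥ 0. Fix x_c ∈ ℝ, an integer k ≥ 1, and δ > 0, and set a_k = f^{(k)}(x_c)/k!. Then for every τ with 0 < τ ≤ δ · η^{−(k+1)} · (k+1)^{−(k+2)} · 2^{−k}, one has | (1/(k! τ^k)) · Σ_{i=0}^{k} (−1)^{k−i} · C(k,i) · f(x_c + iτ) − a_k | ≤ δ. -/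
open fwdDiff Function

/-- MVT: global Lipschitz bound from derivative bound. -/
lemma lip_of_deriv_bound (φ : ℝ → ℝ) (hφ : Differentiable ℝ φ) (C : ℝ)
    (hC : ∀ y, |deriv φ y| ≤ C) (a b : ℝ) : |φ b - φ a| ≤ C * |b - a| := by
  have := Convex.norm_image_sub_le_of_norm_deriv_le (s := Set.univ)
    (fun x _ => hφ x) (fun x _ => hC x) convex_univ (Set.mem_univ a) (Set.mem_univ b)
  simpa [Real.norm_eq_abs] using this

lemma iteratedDeriv_fwdDiff (τ : ℝ) (g : ℝ → ℝ) (hg : ContDiff ℝ (⊤ : ℕ∞) g) (j : ℕ) (x : ℝ) :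
    iteratedDeriv j (Δ_[τ] g) x = iteratedDeriv j g (x + τ) - iteratedDeriv j g x := by
  have h1 : Δ_[τ] g = (fun z => g (z + τ)) - g := rfl
  rw [h1]
  simp only [← iteratedDerivWithin_univ]
  have hgc : ContDiff ℝ (j : ℕ∞) (fun z => g (z + τ)) := by
    exact (hg.of_le (by exact_mod_cast le_top)).comp (contDiff_id.add contDiff_const)
  rw [iteratedDerivWithin_sub (Set.mem_univ x) uniqueDiffOn_univ
    hgc.contDiffWithinAt (hg.of_le (by exact_mod_cast le_top)).contDiffWithinAt]
  simp only [iteratedDerivWithin_univ]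
  rw [iteratedDeriv_comp_add_const]

lemma diff_iter_g (g : ℝ → ℝ) (hg : ContDiff ℝ (⊤ : ℕ∞) g) (j : ℕ) :
    Differentiable ℝ (iteratedDeriv j g) :=
  hg.differentiable_iteratedDeriv j (by exact_mod_cast ENat.coe_lt_top j)

lemma fd_key (τ : ℝ) (hτ : 0 ≤ τ) :
    ∀ (k : ℕ) (g : ℝ → ℝ), ContDiff ℝ (⊤ : ℕ∞) g → ∀ (M : ℝ),
      (∀ y, |iteratedDeriv (k + 1) g y| ≤ M) →
      ∀ x, |(fwdDiff τ)^[k] g x - iteratedDeriv k g x * τ ^ k| ≤ k * M * τ ^ (k + 1) := by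
  intro k
  induction k with
  | zero => intro g hg M hM x; simp
  | succ k IH =>
    intro g hg M hM x
    have hM0 : 0 ≤ M := le_trans (abs_nonneg _) (hM 0)
    set h : ℝ → ℝ := Δ_[τ] g with hh_def
    have hh : ContDiff ℝ (⊤ : ℕ∞) h := by
      have : ContDiff ℝ (⊤ : ℕ∞) (fun z => g (z + τ)) :=
        hg.comp (contDiff_id.add contDiff_const)
      exact this.sub hg
    have hiter : ∀ (j : ℕ) (y : ℝ),
        iteratedDeriv j h y = iteratedDeriv j g (y + τ) - iteratedDeriv j g y :=
      fun j y => iteratedDeriv_fwdDiff τ g hg j y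
    -- Lipschitz bound on iteratedDeriv (k+1) g
    have hlip : ∀ a b : ℝ, |iteratedDeriv (k+1) g b - iteratedDeriv (k+1) g a| ≤ M * |b - a| := by
      intro a b
      refine lip_of_deriv_bound _ (diff_iter_g g hg (k+1)) M ?_ a b
      intro y
      rw [← iteratedDeriv_succ]
      exact hM y
    -- bound on iteratedDeriv (k+1) h
    have hMh : ∀ y, |iteratedDeriv (k + 1) h y| ≤ M * τ := by
      intro y
      rw [hiter (k+1) y]
      have h1 := hlip y (y + τ)
      have h2 : |y + τ - y| = τ := by rw [add_sub_cancel_left, abs_of_nonneg hτ]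
      rwa [h2] at h1
    -- induction hypothesis applied to h
    have hIH := IH h hh (M * τ) hMh x
    -- second piece: Taylor order 1
    have htay : |iteratedDeriv k h x - iteratedDeriv (k+1) g x * τ| ≤ M * τ ^ 2 := by
      set φ : ℝ → ℝ := fun t => iteratedDeriv k g (x + t) - iteratedDeriv (k+1) g x * t with hφ
      have hder : ∀ t : ℝ, HasDerivAt φ
          (iteratedDeriv (k+1) g (x + t) - iteratedDeriv (k+1) g x) t := by
        intro t
        have h1 : HasDerivAt (fun t : ℝ => iteratedDeriv k g (x + t))
            (iteratedDeriv (k+1) g (x + t)) t := by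
          have hinner : HasDerivAt (fun t : ℝ => x + t) 1 t := by
            simpa using (hasDerivAt_id t).const_add x
          have houter : HasDerivAt (iteratedDeriv k g)
              (iteratedDeriv (k+1) g (x + t)) (x + t) := by
            rw [iteratedDeriv_succ]
            exact (diff_iter_g g hg k (x + t)).hasDerivAt
          have := houter.comp t hinner; rw [mul_one] at this; exact this
        have h2 : HasDerivAt (fun t : ℝ => iteratedDeriv (k+1) g x * t)
            (iteratedDeriv (k+1) g x) t := by
          simpa using (hasDerivAt_id t).const_mul (iteratedDeriv (k+1) g x)
        exact h1.sub h2
      have hbnd : ∀ t ∈ Set.Icc (0:ℝ) τ, ‖deriv φ t‖ ≤ M * τ := by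
        intro t ht
        rw [(hder t).deriv, Real.norm_eq_abs]
        calc |iteratedDeriv (k+1) g (x + t) - iteratedDeriv (k+1) g x|
            ≤ M * |x + t - x| := hlip x (x + t)
          _ = M * |t| := by ring_nf
          _ ≤ M * τ := by
              apply mul_le_mul_of_nonneg_left _ hM0
              rw [abs_of_nonneg ht.1]; exact ht.2
      have := Convex.norm_image_sub_le_of_norm_deriv_le (s := Set.Icc (0:ℝ) τ)
        (fun t _ => (hder t).differentiableAt) hbnd (convex_Icc 0 τ)
        (Set.left_mem_Icc.mpr hτ) (Set.right_mem_Icc.mpr hτ)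
      have hφτ : φ τ - φ 0 = iteratedDeriv k g (x + τ) - iteratedDeriv k g x
          - iteratedDeriv (k+1) g x * τ := by simp [hφ]; ring
      rw [hiter k x]
      have : |φ τ - φ 0| ≤ M * τ * |τ - 0| := by simpa [Real.norm_eq_abs] using this
      rw [hφτ] at this
      calc |iteratedDeriv k g (x + τ) - iteratedDeriv k g x - iteratedDeriv (k+1) g x * τ|
          ≤ M * τ * |τ - 0| := this
        _ = M * τ ^ 2 := by rw [sub_zero, abs_of_nonneg hτ]; ring
    -- combine
    have hsplit : (fwdDiff τ)^[k+1] g x - iteratedDeriv (k+1) g x * τ ^ (k+1)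
        = ((fwdDiff τ)^[k] h x - iteratedDeriv k h x * τ ^ k)
          + (iteratedDeriv k h x - iteratedDeriv (k+1) g x * τ) * τ ^ k := by
      rw [Function.iterate_succ_apply]
      ring
    rw [hsplit]
    calc |((fwdDiff τ)^[k] h x - iteratedDeriv k h x * τ ^ k)
          + (iteratedDeriv k h x - iteratedDeriv (k+1) g x * τ) * τ ^ k|
        ≤ |(fwdDiff τ)^[k] h x - iteratedDeriv k h x * τ ^ k|
          + |iteratedDeriv k h x - iteratedDeriv (k+1) g x * τ| * |τ ^ k| := by
          refine (abs_add_le _ _).trans ?_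
          rw [abs_mul]
      _ ≤ k * (M * τ) * τ ^ (k+1) + (M * τ ^ 2) * τ ^ k := by
          gcongr
          · rw [abs_pow, abs_of_nonneg hτ]
      _ ≤ (↑(k+1)) * M * τ ^ (k+1+1) := by
          push_cast
          ring_nf
          nlinarith [pow_nonneg hτ k, pow_nonneg hτ (k+1)]



/-- Finite-difference approximation of Taylor coefficients: if `f` is smooth with
`|f^(j)(x)| ≤ j! η^j` for all `x, j`, and `a_k = f^(k)(x_c)/k!`, then for any small
enough `τ > 0` the `k`-th finite difference quotient approximates `a_k` within `δ`. -/
theorem stmt_9 (f : ℝ → ℝ) (hf : ContDiff ℝ (⊤ : ℕ∞) f) (η : ℝ) (hη : 0 < η)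
    (hbound : ∀ (j : ℕ) (x : ℝ), |iteratedDeriv j f x| ≤ (j.factorial : ℝ) * η ^ j)
    (xc : ℝ) (k : ℕ) (hk : 1 ≤ k) (δ : ℝ) (hδ : 0 < δ)
    (ak : ℝ) (hak : ak = iteratedDeriv k f xc / (k.factorial : ℝ))
    (τ : ℝ) (hτ0 : 0 < τ)
    (hτ : τ ≤ δ * (η ^ (k + 1))⁻¹ * (((k : ℝ) + 1) ^ (k + 2))⁻¹ * ((2 : ℝ) ^ k)⁻¹) :
    |(1 / ((k.factorial : ℝ) * τ ^ k)) *
        (∑ i ∈ Finset.range (k + 1),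
          (-1 : ℝ) ^ (k - i) * (k.choose i : ℝ) * f (xc + i * τ)) - ak| ≤ δ := by
    -- rewrite the sum as an iterated forward difference
  have hsum : (∑ i ∈ Finset.range (k + 1),
      (-1 : ℝ) ^ (k - i) * (k.choose i : ℝ) * f (xc + i * τ)) = (fwdDiff τ)^[k] f xc := by
    rw [fwdDiff_iter_eq_sum_shift τ f k xc]
    apply Finset.sum_congr rfl
    intro i _
    push_cast [zsmul_eq_mul, nsmul_eq_mul]
    ring
  rw [hsum]
  -- apply the key estimate
  set M : ℝ := ((k+1).factorial : ℝ) * η ^ (k+1) with hM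
  have hkey := fd_key τ hτ0.le k f hf M (fun y => hbound (k+1) y) xc
  -- positivity facts
  have hfac : (0:ℝ) < (k.factorial : ℝ) := by exact_mod_cast k.factorial_pos
  have hτk : (0:ℝ) < τ ^ k := pow_pos hτ0 k
  have hD : (0:ℝ) < (k.factorial : ℝ) * τ ^ k := mul_pos hfac hτk
  -- rewrite goal difference
  have hgoal : (1 / ((k.factorial : ℝ) * τ ^ k)) * (fwdDiff τ)^[k] f xc - ak
      = ((fwdDiff τ)^[k] f xc - iteratedDeriv k f xc * τ ^ k) / ((k.factorial : ℝ) * τ ^ k) := by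
    rw [hak]
    field_simp
  rw [hgoal, abs_div, abs_of_pos hD, div_le_iff₀ hD]
  calc |(fwdDiff τ)^[k] f xc - iteratedDeriv k f xc * τ ^ k|
      ≤ k * M * τ ^ (k+1) := hkey
    _ ≤ δ * ((k.factorial : ℝ) * τ ^ k) := by
        -- k * (k+1)! η^{k+1} τ^{k+1} ≤ δ k! τ^k  ⟺  k (k+1) η^{k+1} τ ≤ δ
        have hfs : ((k+1).factorial : ℝ) = ((k:ℝ)+1) * (k.factorial : ℝ) := by
          rw [Nat.factorial_succ]; push_cast; ring
        have hηk : (0:ℝ) < η ^ (k+1) := pow_pos hη _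
        have hB : (0:ℝ) < ((k:ℝ)+1) ^ (k+2) := by positivity
        have hC : (0:ℝ) < (2:ℝ) ^ k := by positivity
        have e1 : (k:ℝ) ≤ 2 ^ k := by
          exact_mod_cast (Nat.lt_two_pow_self (n := k)).le
        have e2 : ((k:ℝ)+1) ≤ ((k:ℝ)+1) ^ (k+2) := by
          have : ((k:ℝ)+1) ^ 1 ≤ ((k:ℝ)+1) ^ (k+2) := by
            apply pow_le_pow_right₀ (by linarith [Nat.cast_nonneg (α := ℝ) k]) (by omega)
          simpa using this
        -- main chain
        have key : (k:ℝ) * ((k:ℝ)+1) * η ^ (k+1) * τ ≤ δ := by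
          have h1 : (k:ℝ) * ((k:ℝ)+1) * η ^ (k+1) * τ
              ≤ (k:ℝ) * ((k:ℝ)+1) * η ^ (k+1) *
                (δ * (η ^ (k + 1))⁻¹ * (((k : ℝ) + 1) ^ (k + 2))⁻¹ * ((2 : ℝ) ^ k)⁻¹) := by
            apply mul_le_mul_of_nonneg_left hτ
            positivity
          have h2 : (k:ℝ) * ((k:ℝ)+1) * η ^ (k+1) *
                (δ * (η ^ (k + 1))⁻¹ * (((k : ℝ) + 1) ^ (k + 2))⁻¹ * ((2 : ℝ) ^ k)⁻¹)
              = δ * (((k:ℝ) * ((k:ℝ)+1)) / (2 ^ k * ((k:ℝ)+1) ^ (k+2))) := by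
            field_simp
          have h3 : δ * (((k:ℝ) * ((k:ℝ)+1)) / (2 ^ k * ((k:ℝ)+1) ^ (k+2))) ≤ δ * 1 := by
            apply mul_le_mul_of_nonneg_left _ hδ.le
            rw [div_le_one (by positivity)]
            exact mul_le_mul e1 e2 (by positivity) (by positivity)
          linarith
        have expand : (k:ℝ) * M * τ ^ (k+1)
            = ((k:ℝ) * ((k:ℝ)+1) * η ^ (k+1) * τ) * ((k.factorial : ℝ) * τ ^ k) := by
          rw [hM, hfs, pow_succ]
          ring
        rw [expand]
        exact mul_le_mul_of_nonneg_right key hD.le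
end

section
/- For every integer k ≥ 1 and every real number x, the k-th derivative of the hyperbolic tangent satisfies |tanh^{(k)}(x)| ≤ 2^{k+1} · k!. -/
/-!
Since `tanh' = 1 - tanh²`, the chain rule gives `tanh⁽ᵏ⁾ = Pₖ ∘ tanh` with `P₀ = X` and
`Pₖ₊₁ = Pₖ' · (1 - X²)`. Measure `Pₖ` by the ℓ¹ norm of its coefficients, which bounds `|Pₖ(t)|`
for `|t| ≤ 1`. As `deg Pₖ ≤ k + 1`, differentiating multiplies this norm by at most `k + 1` and
multiplying by `1 - X²` by at most `2`, so `‖Pₖ‖₁ ≤ 2ᵏ k!`; finally `|tanh x| < 1`.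
-/

open Polynomial Finset

namespace Polynomial

variable {R : Type*} [SeminormedRing R]

noncomputable def l1Norm (p : R[X]) : ℝ :=
  p.sum fun _ a => ‖a‖

theorem l1Norm_eq_sum_range (p : R[X]) {n : ℕ} (hn : p.natDegree < n) :
    p.l1Norm = ∑ i ∈ range n, ‖p.coeff i‖ :=
  p.sum_over_range' (fun _ => norm_zero) n hn

theorem l1Norm_nonneg (p : R[X]) : 0 ≤ p.l1Norm :=
  sum_nonneg fun _ _ => norm_nonneg _

theorem l1Norm_sub_le (p q : R[X]) : (p - q).l1Norm ≤ p.l1Norm + q.l1Norm := by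
  set n := max p.natDegree q.natDegree + 1
  have hpq : (p - q).natDegree < n := Nat.lt_succ_of_le (natDegree_sub_le p q)
  rw [l1Norm_eq_sum_range _ hpq, l1Norm_eq_sum_range p (n := n) (by omega),
    l1Norm_eq_sum_range q (n := n) (by omega), ← sum_add_distrib]
  exact sum_le_sum fun i _ => (coeff_sub p q i).symm ▸ norm_sub_le _ _

theorem l1Norm_mul_X_pow (p : R[X]) (n : ℕ) : (p * X ^ n).l1Norm = p.l1Norm := by
  have hdeg : (p * X ^ n).natDegree < n + (p.natDegree + 1) := by
    have := natDegree_mul_le (p := p) (q := X ^ n)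
    have := natDegree_X_pow_le (R := R) n
    omega
  rw [l1Norm_eq_sum_range _ hdeg, sum_range_add, l1Norm_eq_sum_range p (Nat.lt_succ_self _)]
  have hlow : ∀ i ∈ range n, ‖(p * X ^ n).coeff i‖ = 0 := fun i hi => by
    rw [coeff_mul_X_pow', if_neg (by simpa using hi), norm_zero]
  simp only [sum_eq_zero hlow, zero_add, add_comm n, coeff_mul_X_pow]

theorem l1Norm_mul_one_sub_X_sq_le (p : R[X]) :
    (p * (1 - X ^ 2)).l1Norm ≤ 2 * p.l1Norm := by
  calc (p * (1 - X ^ 2)).l1Norm ≤ p.l1Norm + (p * X ^ 2).l1Norm := by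
        rw [mul_sub, mul_one]; exact l1Norm_sub_le _ _
    _ = 2 * p.l1Norm := by rw [l1Norm_mul_X_pow]; ring

theorem l1Norm_derivative_le [NormOneClass R] (p : R[X]) :
    (derivative p).l1Norm ≤ p.natDegree * p.l1Norm := by
  set d := p.natDegree
  have hcoeff (i : ℕ) : ‖(derivative p).coeff i‖ ≤ d * ‖p.coeff (i + 1)‖ := by
    rw [coeff_derivative]
    by_cases hi : i + 1 ≤ d
    · calc ‖p.coeff (i + 1) * (i + 1 : R)‖ ≤ ‖p.coeff (i + 1)‖ * (i + 1 : ℕ) := by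
            refine (norm_mul_le _ _).trans (mul_le_mul_of_nonneg_left ?_ (norm_nonneg _))
            simpa using Nat.norm_cast_le (α := R) (i + 1)
        _ ≤ d * ‖p.coeff (i + 1)‖ := by
            rw [mul_comm]; gcongr
    · rw [coeff_eq_zero_of_natDegree_lt (by omega)]; simp
  calc (derivative p).l1Norm = ∑ i ∈ range (d + 1), ‖(derivative p).coeff i‖ :=
        l1Norm_eq_sum_range _ ((natDegree_derivative_le p).trans_lt (by omega))
    _ ≤ ∑ i ∈ range (d + 1), d * ‖p.coeff (i + 1)‖ := sum_le_sum fun i _ => hcoeff i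
    _ ≤ d * ∑ i ∈ range (d + 2), ‖p.coeff i‖ := by
        rw [← mul_sum, sum_range_succ' _ (d + 1)]
        gcongr; exact le_add_of_nonneg_right (norm_nonneg _)
    _ = d * p.l1Norm := by rw [l1Norm_eq_sum_range p (n := d + 2) (by omega)]

theorem norm_eval_le_l1Norm [NormOneClass R] (p : R[X]) {x : R} (hx : ‖x‖ ≤ 1) :
    ‖p.eval x‖ ≤ p.l1Norm := by
  rw [eval_eq_sum]
  refine (norm_sum_le _ _).trans (sum_le_sum fun i _ => ?_)
  calc ‖p.coeff i * x ^ i‖ ≤ ‖p.coeff i‖ * ‖x‖ ^ i :=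
        (norm_mul_le _ _).trans (mul_le_mul_of_nonneg_left (norm_pow_le x i) (norm_nonneg _))
    _ ≤ ‖p.coeff i‖ := mul_le_of_le_one_right (norm_nonneg _) (pow_le_one₀ (norm_nonneg x) hx)

end Polynomial

theorem Real.hasDerivAt_tanh (x : ℝ) : HasDerivAt Real.tanh (1 - Real.tanh x ^ 2) x := by
  have hcosh : Real.cosh x ≠ 0 := (Real.cosh_pos x).ne'
  rw [show Real.tanh = Real.sinh / Real.cosh from funext Real.tanh_eq_sinh_div_cosh]
  refine ((Real.hasDerivAt_sinh x).div (Real.hasDerivAt_cosh x) hcosh).congr_deriv ?_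
  rw [Pi.div_apply]
  field_simp

noncomputable def tanhDerivPoly : ℕ → ℝ[X]
  | 0 => X
  | k + 1 => derivative (tanhDerivPoly k) * (1 - X ^ 2)

theorem iteratedDeriv_tanh (k : ℕ) :
    iteratedDeriv k Real.tanh = fun x => (tanhDerivPoly k).eval (Real.tanh x) := by
  induction k with
  | zero => simp [tanhDerivPoly]
  | succ k ih =>
    funext x
    have h : HasDerivAt (fun y => (tanhDerivPoly k).eval (Real.tanh y))
        ((derivative (tanhDerivPoly k)).eval (Real.tanh x) * (1 - Real.tanh x ^ 2)) x :=
      ((tanhDerivPoly k).hasDerivAt _).comp x (Real.hasDerivAt_tanh x)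
    rw [iteratedDeriv_succ, ih, h.deriv, tanhDerivPoly, eval_mul]
    simp

theorem natDegree_tanhDerivPoly_le (k : ℕ) : (tanhDerivPoly k).natDegree ≤ k + 1 := by
  induction k with
  | zero => simp [tanhDerivPoly]
  | succ k ih =>
    have hderiv := natDegree_derivative_le (tanhDerivPoly k)
    have hfactor : (1 - X ^ 2 : ℝ[X]).natDegree ≤ 2 :=
      (natDegree_sub_le _ _).trans (by simp)
    exact natDegree_mul_le.trans (by omega)

theorem l1Norm_tanhDerivPoly_le (k : ℕ) : (tanhDerivPoly k).l1Norm ≤ 2 ^ k * k.factorial := by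
  induction k with
  | zero => simp [tanhDerivPoly, l1Norm]
  | succ k ih =>
    have hdeg : ((tanhDerivPoly k).natDegree : ℝ) ≤ k + 1 := by
      exact_mod_cast natDegree_tanhDerivPoly_le k
    calc (tanhDerivPoly (k + 1)).l1Norm ≤ 2 * (derivative (tanhDerivPoly k)).l1Norm :=
          l1Norm_mul_one_sub_X_sq_le _
      _ ≤ 2 * ((k + 1) * (2 ^ k * k.factorial)) := by
          gcongr
          exact (l1Norm_derivative_le _).trans
            (mul_le_mul hdeg ih (l1Norm_nonneg _) (by positivity))
      _ = 2 ^ (k + 1) * (k + 1).factorial := by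
          push_cast [Nat.factorial_succ]; ring

theorem stmt_12_general (k : ℕ) (x : ℝ) :
    |iteratedDeriv k Real.tanh x| ≤ 2 ^ (k + 1) * (k.factorial : ℝ) := by
  rw [iteratedDeriv_tanh, ← Real.norm_eq_abs]
  calc ‖(tanhDerivPoly k).eval (Real.tanh x)‖ ≤ (tanhDerivPoly k).l1Norm :=
        norm_eval_le_l1Norm _ (Real.abs_tanh_lt_one x).le
    _ ≤ 2 ^ k * k.factorial := l1Norm_tanhDerivPoly_le k
    _ ≤ 2 ^ (k + 1) * k.factorial := by gcongr <;> simp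

/-- Derivative bounds for the hyperbolic tangent: `|tanh^(k)(x)| ≤ 2^(k+1) * k!`
for every `k ≥ 1` and every real `x`. -/
theorem stmt_12 (k : ℕ) (hk : 1 ≤ k) (x : ℝ) :
    |iteratedDeriv k Real.tanh x| ≤ 2 ^ (k + 1) * (k.factorial : ℝ) :=
  stmt_12_general k x
end

section
/- Let α > 0, let 0 < β < 1/2, let C be a real number with C ≥ α^{−1} · log((1−β)/β), and define F : ℝ → ℝ by F(x) = 1/(1 + e^{−Cx}). Then: (i) for all x < −α, F(x) < β; (ii) for all x > α, 1 − F(x) < β; and (iii) for every integer k ≥ 1 and every real x, |F^{(k)}(x)| ≤ k! · C^k. -/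
/-!
Write `F x = σ (C x)` with `σ` the standard sigmoid. The tail bounds follow from the monotonicity
of `σ`, from `σ (log (β / (1 - β))) = β` and from `1 - σ t = σ (-t)`.

For the derivatives, `σ' = σ (1 - σ)` gives
`(σ^a (1-σ)^b)' = a σ^a (1-σ)^(b+1) - b σ^(a+1) (1-σ)^b`: differentiating a monomial of degree
`d = a + b` produces two monomials of degree `d + 1` with coefficients of total size `d`. Since
`0 ≤ σ ≤ 1`, induction gives `|(σ^a (1-σ)^b)^(n)| ≤ d (d+1) ⋯ (d+n-1)`, which is `n!` for `σ`
itself, and the chain rule contributes the factor `C^n`.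
-/

open Real
open scoped ContDiff

namespace Real

lemma sigmoid_log_div_one_sub {β : ℝ} (hβ0 : 0 < β) (hβ1 : β < 1) :
    sigmoid (log (β / (1 - β))) = β := by
  have h1β : 0 < 1 - β := by linarith
  rw [sigmoid_def, exp_neg, exp_log (by positivity)]
  field_simp
  ring

lemma sigmoid_mul_lt_of_lt_neg {α β C x : ℝ} (hβ0 : 0 < β) (hβ1 : β < 1) (hC : 0 < C)
    (hCα : log ((1 - β) / β) ≤ C * α) (hx : x < -α) : sigmoid (C * x) < β := by
  rw [← sigmoid_log_div_one_sub hβ0 hβ1, sigmoid_lt_iff, ← inv_div, log_inv]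
  nlinarith

lemma contDiff_sigmoid_pow_mul_one_sub_pow (a b : ℕ) :
    ContDiff ℝ ω (fun x => sigmoid x ^ a * (1 - sigmoid x) ^ b) :=
  (contDiff_sigmoid.pow a).mul ((contDiff_const.sub contDiff_sigmoid).pow b)

lemma deriv_sigmoid_pow_mul_one_sub_pow (a b : ℕ) :
    deriv (fun x => sigmoid x ^ a * (1 - sigmoid x) ^ b) = fun x =>
      a * (sigmoid x ^ a * (1 - sigmoid x) ^ (b + 1)) -
        b * (sigmoid x ^ (a + 1) * (1 - sigmoid x) ^ b) := by
  funext x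
  have hσ := hasDerivAt_sigmoid x
  rw [((hσ.fun_pow a).fun_mul ((hσ.const_sub 1).fun_pow b)).deriv]
  rcases a with _ | a <;> rcases b with _ | b <;> simp only [pow_succ] <;> push_cast <;> ring

lemma abs_iteratedDeriv_sigmoid_pow_mul_one_sub_pow_le (n a b : ℕ) (x : ℝ) :
    |iteratedDeriv n (fun x => sigmoid x ^ a * (1 - sigmoid x) ^ b) x| ≤
      (a + b).ascFactorial n := by
  induction n generalizing a b with
  | zero =>
    have h0 := sigmoid_nonneg x
    have h1 := sigmoid_le_one x
    rw [iteratedDeriv_zero, abs_of_nonneg (by positivity), Nat.ascFactorial_zero, Nat.cast_one]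
    exact mul_le_one₀ (pow_le_one₀ h0 h1) (by positivity) (pow_le_one₀ (by linarith) (by linarith))
  | succ n ih =>
    have hcd (i j : ℕ) : ContDiffAt ℝ n (fun x => sigmoid x ^ i * (1 - sigmoid x) ^ j) x :=
      (contDiff_sigmoid_pow_mul_one_sub_pow i j).contDiffAt.of_le le_top
    have ih₁ : |iteratedDeriv n (fun x => sigmoid x ^ a * (1 - sigmoid x) ^ (b + 1)) x| ≤
        (a + b + 1).ascFactorial n := by simpa only [add_assoc] using ih a (b + 1)
    have ih₂ : |iteratedDeriv n (fun x => sigmoid x ^ (a + 1) * (1 - sigmoid x) ^ b) x| ≤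
        (a + b + 1).ascFactorial n := by simpa only [add_right_comm] using ih (a + 1) b
    rw [iteratedDeriv_succ', deriv_sigmoid_pow_mul_one_sub_pow,
      iteratedDeriv_fun_sub (contDiffAt_const.mul (hcd a (b + 1)))
        (contDiffAt_const.mul (hcd (a + 1) b)),
      iteratedDeriv_const_mul _ (hcd _ _), iteratedDeriv_const_mul _ (hcd _ _)]
    calc _ ≤ (a : ℝ) * (a + b + 1).ascFactorial n + (b : ℝ) * (a + b + 1).ascFactorial n := by
          refine (abs_sub _ _).trans ?_
          rw [abs_mul, abs_mul, Nat.abs_cast, Nat.abs_cast]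
          gcongr
      _ = ((a + b).ascFactorial (n + 1) : ℕ) := by
          rw [Nat.ascFactorial_succ, ← Nat.succ_ascFactorial]
          push_cast
          ring

lemma abs_iteratedDeriv_sigmoid_le (n : ℕ) (x : ℝ) :
    |iteratedDeriv n sigmoid x| ≤ n.factorial := by
  simpa using abs_iteratedDeriv_sigmoid_pow_mul_one_sub_pow_le n 1 0 x

lemma abs_iteratedDeriv_sigmoid_comp_mul_le {C : ℝ} (hC : 0 ≤ C) (n : ℕ) (x : ℝ) :
    |iteratedDeriv n (fun x => sigmoid (C * x)) x| ≤ n.factorial * C ^ n := by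
  rw [iteratedDeriv_comp_const_mul (contDiff_sigmoid.of_le le_top), abs_mul,
    abs_of_nonneg (pow_nonneg hC n), mul_comm]
  gcongr
  exact abs_iteratedDeriv_sigmoid_le n _

end Real

/-- Properties of the logistic sigmoid `F(x) = 1/(1 + e^(-Cx))` with
`C ≥ α⁻¹ log((1-β)/β)`: it is within `β` of a step function outside `[-α, α]`, and its
`k`-th derivative is bounded by `k! C^k`. -/
theorem stmt_13 (α β C : ℝ) (hα : 0 < α) (hβ0 : 0 < β) (hβ : β < 1 / 2)
    (hC : α⁻¹ * Real.log ((1 - β) / β) ≤ C)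
    (F : ℝ → ℝ) (hF : F = fun x => 1 / (1 + Real.exp (-C * x))) :
    (∀ x < -α, F x < β) ∧
    (∀ x > α, 1 - F x < β) ∧
    (∀ k : ℕ, 1 ≤ k → ∀ x : ℝ, |iteratedDeriv k F x| ≤ (k.factorial : ℝ) * C ^ k) := by
  have hβ1 : β < 1 := by linarith
  have hlog : 0 < log ((1 - β) / β) := log_pos <| by rw [lt_div_iff₀ hβ0]; linarith
  have hC0 : 0 < C := (by positivity : 0 < α⁻¹ * log ((1 - β) / β)).trans_le hC
  have hCα : log ((1 - β) / β) ≤ C * α := by rwa [inv_mul_le_iff₀ hα, mul_comm] at hC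
  have hFσ : F = fun x => sigmoid (C * x) := by
    simp only [hF, sigmoid_def, one_div, neg_mul]
  subst hFσ
  refine ⟨fun x hx => sigmoid_mul_lt_of_lt_neg hβ0 hβ1 hC0 hCα hx, fun x hx => ?_,
    fun k _ x => abs_iteratedDeriv_sigmoid_comp_mul_le hC0.le k x⟩
  rw [← sigmoid_neg, ← mul_neg]
  exact sigmoid_mul_lt_of_lt_neg hβ0 hβ1 hC0 hCα (neg_lt_neg hx)
end
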